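/- Let S be the even hyperbolic lattice of rank 4 with basis h, e1, e2, e3 and Gram matrix [[-12,-2,0,0],[-2,2,-1,0],[0,-1,2,-1],[0,0,-1,2]]. Let P = {e1, e2, e3, h - 2e1 - 2e2 - e3, h - 2e2 - 3e3, h - e1 - 3e2 - 2e3, 2h - 2e1 - 4e2 - 5e3, 2h - 3e1 - 4e2 - 4e3}. Then every element of P has square 2, but there exists no vector ρ ∈ S ⊗ ℚ with (ρ, δ) = -1 for every δ ∈ P. -/

import Mathlib

/-- The bilinear form on `ℚ^n` given by a Gram matrix `G`. -/
def bil {n : ℕ} (G : Matrix (Fin n) (Fin n) ℚ) (x y : Fin n → ℚ) : ℚ :=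
  ∑ i, ∑ j, x i * G i j * y j

/-- The Gram matrix of `S` in the basis `h, e1, e2, e3`. -/
def G6 : Matrix (Fin 4) (Fin 4) ℚ :=
  !![-12, -2, 0, 0; -2, 2, -1, 0; 0, -1, 2, -1; 0, 0, -1, 2]

/-- `P = (e1, e2, e3, h-2e1-2e2-e3, h-2e2-3e3, h-e1-3e2-2e3, 2h-2e1-4e2-5e3, 2h-3e1-4e2-4e3)`. -/
def P6 : Fin 8 → (Fin 4 → ℚ) :=
  ![![0, 1, 0, 0], ![0, 0, 1, 0], ![0, 0, 0, 1], ![1, -2, -2, -1],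
    ![1, 0, -2, -3], ![1, -1, -3, -2], ![2, -2, -4, -5], ![2, -3, -4, -4]]

/-!
The roots `δ₀ = e₁, δ₁ = e₂, δ₂ = e₃, δ₃ = h - 2e₁ - 2e₂ - e₃, δ₅ = h - e₁ - 3e₂ - 2e₃` satisfy
`δ₅ - δ₃ = e₁ - e₂ - e₃ = δ₀ - δ₁ - δ₂`, a linear relation whose coefficients sum to `1`.
Pairing a lattice Weyl vector with `δ₀ - δ₁ - δ₂ - δ₃ + δ₅ = 0` would give `0 = -1`.
-/

theorem bil_eq_toLinearMap₂' {n : ℕ} (G : Matrix (Fin n) (Fin n) ℚ) (x y : Fin n → ℚ) :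
    bil G x y = Matrix.toLinearMap₂' ℚ G x y := by
  simp only [bil, Matrix.toLinearMap₂'_apply, smul_eq_mul]
  exact Finset.sum_congr rfl fun _ _ => Finset.sum_congr rfl fun _ _ => by ring

theorem bil_sum_smul_right {n : ℕ} {ι : Type*} [Fintype ι] (G : Matrix (Fin n) (Fin n) ℚ)
    (x : Fin n → ℚ) (c : ι → ℚ) (v : ι → Fin n → ℚ) :
    bil G x (∑ i, c i • v i) = ∑ i, c i * bil G x (v i) := by
  simp only [bil_eq_toLinearMap₂', map_sum, map_smul, smul_eq_mul]

theorem not_exists_bil_eq_neg_one_of_relation {n : ℕ} {ι : Type*} [Fintype ι]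
    (G : Matrix (Fin n) (Fin n) ℚ) (P : ι → Fin n → ℚ) (c : ι → ℚ)
    (hrel : ∑ i, c i • P i = 0) (hc : ∑ i, c i ≠ 0) :
    ¬ ∃ ρ : Fin n → ℚ, ∀ i, bil G ρ (P i) = -1 := by
  rintro ⟨ρ, hρ⟩
  have h : bil G ρ (∑ i, c i • P i) = -∑ i, c i := by
    simp only [bil_sum_smul_right, hρ, mul_neg_one, Finset.sum_neg_distrib]
  rw [hrel, bil_eq_toLinearMap₂', map_zero] at h
  exact hc (neg_eq_zero.mp h.symm)

theorem bil_P6_self (i : Fin 8) : bil G6 (P6 i) (P6 i) = 2 := by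
  fin_cases i <;> simp [bil, G6, P6, Fin.sum_univ_four] <;> norm_num

theorem P6_relation : ∑ i, (![-1, 1, 1, -1, 0, 1, 0, 0] : Fin 8 → ℚ) i • P6 i = 0 := by
  funext j
  fin_cases j <;> norm_num [Fin.sum_univ_succ, P6]

theorem stmt6 :
    (∀ i, bil G6 (P6 i) (P6 i) = 2) ∧
    ¬ ∃ ρ : Fin 4 → ℚ, ∀ i, bil G6 ρ (P6 i) = -1 :=
  ⟨bil_P6_self, not_exists_bil_eq_neg_one_of_relation G6 P6 _ P6_relation
    (by simp [Fin.sum_univ_succ])⟩
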